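/- Let U = U_E (so U_E(t) = t − T/2) and let P be an m×n matrix with entries in [0,1], m ≥ T ≥ 1, n ≥ T, such that at least T−1 of the rows of P are identically zero. Let P' be the (m+1)×n matrix obtained from P by appending one additional all-zero row. Then V(G(T,P',U_E)) = V(G(T,P,U_E)); i.e., under U_E, recruiting a T-th dominated player gives no advantage over T−1 dominated players. -/

import Mathlib

/-!
Recruiting a player never hurts: with the extra row Team 1 may simply never send it. Conversely,
Team 1 with rows `P` can simulate any strategy of the game with the extra zero row: whenever the
new player would be sent, it sends an unused dominated player instead. Before the last round one
is always available, since at most `T - 2` of the at least `T - 1` dominated players have been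
used; in the last round any unused player will do, because it wins with probability `≥ 0` and
`U_E` is monotone. Both comparisons are instances of one simulation principle: if each available
player of one team can be answered by an available player of the other with pointwise larger
winning probabilities, consistently along every play, the value does not decrease.
-/

/-- Value function of the team competition `G(T,P,U)`, by backward induction.
`gval m n P U r X Y w` is the value of the state where the players in `X` (Team 1)
and `Y` (Team 2) have already played, Team 1 has won `w` rounds so far, and
`r = T - |X|` rounds remain to be played.  The value of the whole game is
`gval m n P U T ∅ ∅ 0`. -/
noncomputable def gval (m n : ℕ) (P : Fin m → Fin n → ℝ) (U : ℕ → ℝ) :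
    ℕ → Finset (Fin m) → Finset (Fin n) → ℕ → ℝ
  | 0, _, _, w => U w
  | r + 1, X, Y, w =>
      sSup {v : ℝ | ∃ p : Fin m → ℝ,
        (∀ i, 0 ≤ p i) ∧ (∀ i ∈ X, p i = 0) ∧ (∑ i, p i) = 1 ∧
        v = sInf {u : ℝ | ∃ j, j ∉ Y ∧
          u = ∑ i, p i *
            (P i j * gval m n P U r (insert i X) (insert j Y) (w + 1) +
             (1 - P i j) * gval m n P U r (insert i X) (insert j Y) w)}}

/-- The utility function `U_E(t) = t - T/2`. -/
noncomputable def UE (T : ℕ) : ℕ → ℝ := fun t => (t : ℝ) - (T : ℝ) / 2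

open Finset

section MaxMin

variable {α β γ : Type*}

noncomputable def maxmin (A : α → Prop) (B : β → Prop) (f : α → β → ℝ) : ℝ :=
  sSup {v | ∃ p, A p ∧ v = sInf {u | ∃ j, B j ∧ u = f p j}}

variable {A : α → Prop} {A' : γ → Prop} {B : β → Prop} {f : α → β → ℝ} {g : γ → β → ℝ}
  {a b : ℝ}

lemma sInf_mem_Icc_of_subset {s : Set ℝ} (hs : s.Nonempty) (h : s ⊆ Set.Icc a b) :
    sInf s ∈ Set.Icc a b :=
  ⟨le_csInf hs fun _ hx => (h hx).1,
    (csInf_le ⟨a, fun _ hx => (h hx).1⟩ hs.some_mem).trans (h hs.some_mem).2⟩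

lemma sSup_mem_Icc_of_subset {s : Set ℝ} (hs : s.Nonempty) (h : s ⊆ Set.Icc a b) :
    sSup s ∈ Set.Icc a b :=
  ⟨(h hs.some_mem).1.trans (le_csSup ⟨b, fun _ hx => (h hx).2⟩ hs.some_mem),
    csSup_le hs fun _ hx => (h hx).2⟩

lemma sInf_setOf_mem_Icc {f : β → ℝ} (hB : ∃ j, B j) (hf : ∀ j, B j → f j ∈ Set.Icc a b) :
    sInf {u | ∃ j, B j ∧ u = f j} ∈ Set.Icc a b := by
  obtain ⟨j₀, hj₀⟩ := hB
  refine sInf_mem_Icc_of_subset ⟨_, j₀, hj₀, rfl⟩ ?_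
  rintro _ ⟨j, hj, rfl⟩
  exact hf j hj

lemma maxmin_mem_Icc (hA : ∃ p, A p) (hB : ∃ j, B j)
    (hf : ∀ p, A p → ∀ j, B j → f p j ∈ Set.Icc a b) : maxmin A B f ∈ Set.Icc a b := by
  obtain ⟨p₀, hp₀⟩ := hA
  unfold maxmin
  refine sSup_mem_Icc_of_subset ⟨_, p₀, hp₀, rfl⟩ ?_
  rintro _ ⟨p, hp, rfl⟩
  exact sInf_setOf_mem_Icc hB (hf p hp)

lemma maxmin_le_maxmin {a' b' : ℝ} (hA : ∃ p, A p) (hB : ∃ j, B j)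
    (hf : ∀ p, A p → ∀ j, B j → a ≤ f p j)
    (hg : ∀ q, A' q → ∀ j, B j → g q j ∈ Set.Icc a' b')
    (h : ∀ p, A p → ∃ q, A' q ∧ ∀ j, B j → f p j ≤ g q j) :
    maxmin A B f ≤ maxmin A' B g := by
  obtain ⟨p₀, hp₀⟩ := hA
  obtain ⟨j₀, hj₀⟩ := hB
  have hup : BddAbove {v | ∃ q, A' q ∧ v = sInf {u | ∃ j, B j ∧ u = g q j}} := by
    refine ⟨b', ?_⟩
    rintro _ ⟨q, hq, rfl⟩
    exact (sInf_setOf_mem_Icc ⟨j₀, hj₀⟩ (hg q hq)).2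
  unfold maxmin
  refine csSup_le ⟨_, p₀, hp₀, rfl⟩ ?_
  rintro _ ⟨p, hp, rfl⟩
  obtain ⟨q, hq, hfg⟩ := h p hp
  have hlow : BddBelow {u | ∃ j, B j ∧ u = f p j} := by
    refine ⟨a, ?_⟩
    rintro _ ⟨j, hj, rfl⟩
    exact hf p hp j hj
  have hinf : sInf {u | ∃ j, B j ∧ u = f p j} ≤ sInf {u | ∃ j, B j ∧ u = g q j} := by
    refine le_csInf ⟨_, j₀, hj₀, rfl⟩ ?_
    rintro _ ⟨j, hj, rfl⟩
    exact (csInf_le hlow ⟨j, hj, rfl⟩).trans (hfg j hj)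
  exact hinf.trans (le_csSup hup ⟨q, hq, rfl⟩)

end MaxMin

section Game

variable {m n : ℕ} {P : Fin m → Fin n → ℝ} {U : ℕ → ℝ}

def IsMixedStrategy (X : Finset (Fin m)) (p : Fin m → ℝ) : Prop :=
  (∀ i, 0 ≤ p i) ∧ (∀ i ∈ X, p i = 0) ∧ ∑ i, p i = 1

lemma exists_notMem_of_card_lt {k : ℕ} {Z : Finset (Fin k)} (h : #Z < k) : ∃ i, i ∉ Z := by
  obtain ⟨i, -, hi⟩ := exists_mem_notMem_of_card_lt_card (s := Z) (t := univ) (by simpa using h)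
  exact ⟨i, hi⟩

lemma exists_isMixedStrategy {X : Finset (Fin m)} (hX : #X < m) :
    ∃ p, IsMixedStrategy X p := by
  obtain ⟨i₀, hi₀⟩ := exists_notMem_of_card_lt hX
  refine ⟨Pi.single i₀ 1, fun i => ?_, fun i hi => ?_, by simp⟩
  · by_cases h : i = i₀ <;> simp [h]
  · exact Pi.single_eq_of_ne (by rintro rfl; exact hi₀ hi) _

lemma IsMixedStrategy.pushforward {m' : ℕ} {X' : Finset (Fin m')} {X : Finset (Fin m)}
    {p' : Fin m' → ℝ} (hp' : IsMixedStrategy X' p') {σ : Fin m' → Fin m}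
    (hσ : ∀ i' ∉ X', σ i' ∉ X) :
    IsMixedStrategy X fun i => ∑ i' with σ i' = i, p' i' := by
  obtain ⟨hnonneg, hzero, hsum⟩ := hp'
  refine ⟨fun i => sum_nonneg fun i' _ => hnonneg i', fun i hi => ?_, ?_⟩
  · refine sum_eq_zero fun i' hi' => hzero i' ?_
    by_contra h
    exact hσ i' h ((mem_filter.1 hi').2 ▸ hi)
  · rw [sum_fiberwise univ σ p', hsum]

lemma sum_pushforward_mul {m' : ℕ} (σ : Fin m' → Fin m) (p' : Fin m' → ℝ) (B : Fin m → ℝ) :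
    ∑ i, (∑ i' with σ i' = i, p' i') * B i = ∑ i', p' i' * B (σ i') := by
  rw [← sum_fiberwise univ σ fun i' => p' i' * B (σ i')]
  refine sum_congr rfl fun i _ => ?_
  rw [sum_mul]
  exact sum_congr rfl fun i' hi' => by rw [(mem_filter.1 hi').2]

variable (P U) in
noncomputable def stageValue (r : ℕ) (X : Finset (Fin m)) (Y : Finset (Fin n)) (w : ℕ)
    (p : Fin m → ℝ) (j : Fin n) : ℝ :=
  ∑ i, p i * (P i j * gval m n P U r (insert i X) (insert j Y) (w + 1) +
    (1 - P i j) * gval m n P U r (insert i X) (insert j Y) w)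

lemma gval_succ (r : ℕ) (X : Finset (Fin m)) (Y : Finset (Fin n)) (w : ℕ) :
    gval m n P U (r + 1) X Y w =
      maxmin (IsMixedStrategy X) (· ∉ Y) (stageValue P U r X Y w) := by
  simp only [gval, maxmin, IsMixedStrategy, stageValue, and_assoc]

lemma stageValue_mem_Icc {a b : ℝ} (hP : ∀ i j, P i j ∈ Set.Icc 0 1) {r : ℕ}
    {X : Finset (Fin m)} {Y : Finset (Fin n)} {w : ℕ} {p : Fin m → ℝ} (hp : IsMixedStrategy X p)
    (j : Fin n) (h₀ : ∀ i, gval m n P U r (insert i X) (insert j Y) w ∈ Set.Icc a b)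
    (h₁ : ∀ i, gval m n P U r (insert i X) (insert j Y) (w + 1) ∈ Set.Icc a b) :
    stageValue P U r X Y w p j ∈ Set.Icc a b :=
  (convex_Icc a b).sum_mem (fun i _ => hp.1 i) hp.2.2 fun i _ =>
    convex_Icc a b (h₁ i) (h₀ i) (hP i j).1 (sub_nonneg.2 (hP i j).2) (add_sub_cancel _ _)

lemma gval_mem_Icc {a b : ℝ} (hP : ∀ i j, P i j ∈ Set.Icc 0 1) (r : ℕ) :
    ∀ (X : Finset (Fin m)) (Y : Finset (Fin n)) (w : ℕ), #X + r ≤ m → #Y + r ≤ n →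
      Set.MapsTo U (Set.Icc w (w + r)) (Set.Icc a b) → gval m n P U r X Y w ∈ Set.Icc a b := by
  induction r with
  | zero => exact fun X Y w _ _ hU => hU ⟨le_rfl, le_rfl⟩
  | succ r ih =>
    intro X Y w hX hY hU
    have hXi : ∀ i, #(insert i X) + r ≤ m := fun i => by grind [card_insert_le]
    have hYj : ∀ j, #(insert j Y) + r ≤ n := fun j => by grind [card_insert_le]
    rw [gval_succ]
    refine maxmin_mem_Icc (exists_isMixedStrategy (by omega)) (exists_notMem_of_card_lt (by omega))
      fun p hp j _ => stageValue_mem_Icc hP hp j (fun i => ?_) (fun i => ?_) <;>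
    refine ih _ _ _ (hXi i) (hYj j) (hU.mono_left (Set.Icc_subset_Icc ?_ ?_)) <;> omega

lemma exists_stageValue_mem_Icc (hP : ∀ i j, P i j ∈ Set.Icc 0 1) {r : ℕ}
    {X : Finset (Fin m)} {Y : Finset (Fin n)} (w : ℕ) (hX : #X + (r + 1) ≤ m)
    (hY : #Y + (r + 1) ≤ n) :
    ∃ a b, ∀ p, IsMixedStrategy X p → ∀ j, stageValue P U r X Y w p j ∈ Set.Icc a b := by
  have hfin := (Set.finite_Icc w (w + (r + 1))).image U
  obtain ⟨⟨a, ha⟩, ⟨b, hb⟩⟩ := And.intro hfin.bddBelow hfin.bddAbove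
  have hU : Set.MapsTo U (Set.Icc w (w + (r + 1))) (Set.Icc a b) := fun k hk =>
    ⟨ha (Set.mem_image_of_mem U hk), hb (Set.mem_image_of_mem U hk)⟩
  refine ⟨a, b, fun p hp j => stageValue_mem_Icc hP hp j (fun i => ?_) (fun i => ?_)⟩ <;>
  refine gval_mem_Icc hP r _ _ _ (by grind [card_insert_le]) (by grind [card_insert_le])
    (hU.mono_left (Set.Icc_subset_Icc ?_ ?_)) <;> omega

theorem gval_le_gval_of_simulation {m' : ℕ} {Q : Fin m' → Fin n → ℝ}
    (hQ : ∀ i j, Q i j ∈ Set.Icc 0 1) (hP : ∀ i j, P i j ∈ Set.Icc 0 1) (hU : Monotone U)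
    (R : ℕ → Finset (Fin m') → Finset (Fin m) → Prop)
    (hR : ∀ r X' X, R (r + 1) X' X → ∀ i' ∉ X', ∃ i ∉ X,
      (∀ j, Q i' j ≤ P i j) ∧ R r (insert i' X') (insert i X))
    (r : ℕ) : ∀ (X' : Finset (Fin m')) (X : Finset (Fin m)) (Y : Finset (Fin n)) (w' w : ℕ),
      R r X' X → #X' + r ≤ m' → #X + r ≤ m → #Y + r ≤ n → w' ≤ w →
      gval m' n Q U r X' Y w' ≤ gval m n P U r X Y w := by
  induction r with
  | zero => exact fun X' X Y w' w _ _ _ _ hw => hU hw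
  | succ r ih =>
    intro X' X Y w' w hrel hX' hX hY hw
    obtain ⟨a, _, hf⟩ := exists_stageValue_mem_Icc (U := U) hQ w' hX' hY
    obtain ⟨a', b', hg⟩ := exists_stageValue_mem_Icc (U := U) hP w hX hY
    have : Nonempty (Fin m) := ⟨⟨0, by omega⟩⟩
    choose! σ hσX hσP hσR using hR r X' X hrel
    rw [gval_succ, gval_succ]
    refine maxmin_le_maxmin (exists_isMixedStrategy (by omega))
      (exists_notMem_of_card_lt (by omega)) (fun p hp j _ => (hf p hp j).1)
      (fun q hq j _ => hg q hq j) fun p' hp' => ⟨_, hp'.pushforward hσX, fun j _ => ?_⟩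
    rw [stageValue, stageValue, sum_pushforward_mul]
    refine sum_le_sum fun i' _ => ?_
    by_cases hi' : i' ∈ X'
    · simp [hp'.2.1 i' hi']
    refine mul_le_mul_of_nonneg_left ?_ (hp'.1 i')
    have hcont : ∀ v' v, v' ≤ v → gval m' n Q U r (insert i' X') (insert j Y) v' ≤
        gval m n P U r (insert (σ i') X) (insert j Y) v := fun v' v hv =>
      ih _ _ _ v' v (hσR i' hi') (by grind [card_insert_le]) (by grind [card_insert_le])
        (by grind [card_insert_le]) hv
    -- Comparing `w' ≤ w` rather than `w' = w` lets the induction absorb the larger winning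
    -- probability of `σ i'` without a separate monotonicity of the value in `w`.
    have h₁ := hcont (w' + 1) (w + 1) (by omega)
    have h₂ := hcont w' (w + 1) (by omega)
    have h₃ := hcont w' w hw
    obtain ⟨hq₀, -⟩ := hQ i' j
    obtain ⟨-, hp₁⟩ := hP (σ i') j
    have hqp := hσP i' hi' j
    nlinarith [mul_nonneg hq₀ (sub_nonneg.2 h₁), mul_nonneg (sub_nonneg.2 hqp) (sub_nonneg.2 h₂),
      mul_nonneg (sub_nonneg.2 hp₁) (sub_nonneg.2 h₃)]

end Game

section Recruitment

variable {m n : ℕ} {P : Fin m → Fin n → ℝ} {U : ℕ → ℝ}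

lemma snoc_mem_Icc (hP : ∀ i j, P i j ∈ Set.Icc 0 1) {q : Fin n → ℝ}
    (hq : ∀ j, q j ∈ Set.Icc 0 1) (i : Fin (m + 1)) (j : Fin n) :
    (Fin.snoc P q : Fin (m + 1) → Fin n → ℝ) i j ∈ Set.Icc 0 1 := by
  induction i using Fin.lastCases with
  | last => simpa using hq j
  | cast i => simpa using hP i j

theorem gval_le_gval_snoc (hP : ∀ i j, P i j ∈ Set.Icc 0 1) {q : Fin n → ℝ}
    (hq : ∀ j, q j ∈ Set.Icc 0 1) (hU : Monotone U) {T : ℕ} (hm : T ≤ m) (hn : T ≤ n) :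
    gval m n P U T ∅ ∅ 0 ≤ gval (m + 1) n (Fin.snoc P q) U T ∅ ∅ 0 := by
  refine gval_le_gval_of_simulation hP (snoc_mem_Icc hP hq) hU
    (fun _ X Z => Z = X.map Fin.castSuccEmb) ?_ T ∅ ∅ ∅ 0 0 rfl (by simpa) (by simp; omega)
    (by simpa) le_rfl
  rintro r X _ rfl i hi
  exact ⟨Fin.castSucc i, by simpa using hi, fun j => by simp, by simp [map_insert]⟩

/-- `X'` is `X`, except that the new row `Fin.last m` may stand in for one used row `s ∈ S`. -/
def ZeroRowCoupling (S X : Finset (Fin m)) (X' : Finset (Fin (m + 1))) : Prop :=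
  X' = X.map Fin.castSuccEmb ∨
    ∃ s ∈ X, s ∈ S ∧ X' = insert (Fin.last m) ((X.erase s).map Fin.castSuccEmb)

lemma ZeroRowCoupling.exists_reply {S X : Finset (Fin m)} {X' : Finset (Fin (m + 1))}
    (hSX : ZeroRowCoupling S X X') (hS : ∀ s ∈ S, ∀ j, P s j = 0) (hP : ∀ i j, 0 ≤ P i j)
    {i' : Fin (m + 1)} (hi' : i' ∉ X') {t : Fin m} (ht : t ∉ X) :
    ∃ i ∉ X, (∀ j, (Fin.snoc P fun _ => 0 : Fin (m + 1) → Fin n → ℝ) i' j ≤ P i j) ∧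
      (t ∈ S → ZeroRowCoupling S (insert i X) (insert i' X')) := by
  induction i' using Fin.lastCases with
  | last =>
    refine ⟨t, ht, fun j => by simpa using hP t j, fun htS => ?_⟩
    rcases hSX with rfl | ⟨s, -, -, rfl⟩
    · exact Or.inr ⟨t, mem_insert_self t X, htS, by rw [erase_insert ht]⟩
    · exact absurd (mem_insert_self _ _) hi'
  | cast i =>
    rcases hSX with rfl | ⟨s, hsX, hsS, rfl⟩
    · exact ⟨i, by simpa using hi', fun j => by simp, fun _ => Or.inl (by simp [map_insert])⟩
    by_cases his : i = s
    · subst his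
      refine ⟨t, ht, fun j => by simpa [hS i hsS j] using hP t j,
        fun htS => Or.inr ⟨t, mem_insert_self t X, htS, ?_⟩⟩
      rw [erase_insert ht, insert_comm, show Fin.castSucc i = Fin.castSuccEmb i from rfl,
        ← map_insert, insert_erase hsX]
    · refine ⟨i, fun hi => hi' ?_, fun j => by simp,
        fun _ => Or.inr ⟨s, mem_insert_of_mem hsX, hsS, ?_⟩⟩
      · simp [hi, his]
      · rw [erase_insert_of_ne his, map_insert, insert_comm]
        rfl

theorem gval_snoc_zero_le (hP : ∀ i j, P i j ∈ Set.Icc 0 1) (hU : Monotone U) {T : ℕ}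
    {S : Finset (Fin m)} (hS : T - 1 ≤ #S) (hSzero : ∀ s ∈ S, ∀ j, P s j = 0) (hm : T ≤ m)
    (hn : T ≤ n) :
    gval (m + 1) n (Fin.snoc P fun _ => 0) U T ∅ ∅ 0 ≤ gval m n P U T ∅ ∅ 0 := by
  refine gval_le_gval_of_simulation (snoc_mem_Icc hP fun _ => ⟨le_rfl, zero_le_one⟩) hP hU
    (fun r X' X => #X + r ≤ T ∧ (r = 0 ∨ ZeroRowCoupling S X X')) ?_ T ∅ ∅ ∅ 0 0
    ⟨by simp, Or.inr (Or.inl rfl)⟩ (by simp; omega) (by simpa) (by simpa) le_rfl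
  rintro r X' X ⟨hX, hSX⟩ i' hi'
  -- While another round follows, `#X < T - 1 ≤ #S` leaves an unused zero row to stand in.
  obtain ⟨t, ht, htS⟩ : ∃ t ∉ X, r = 0 ∨ t ∈ S := by
    rcases Nat.eq_zero_or_pos r with rfl | hr
    · obtain ⟨t, ht⟩ := exists_notMem_of_card_lt (show #X < m by omega)
      exact ⟨t, ht, Or.inl rfl⟩
    · obtain ⟨t, htS, ht⟩ := exists_mem_notMem_of_card_lt_card (show #X < #S by omega)
      exact ⟨t, ht, Or.inr htS⟩
  obtain ⟨i, hi, hPi, hcoupling⟩ := (hSX.resolve_left r.succ_ne_zero).exists_reply hSzero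
    (fun i j => (hP i j).1) hi' ht
  exact ⟨i, hi, hPi, by grind [card_insert_le], htS.imp_right hcoupling⟩

end Recruitment

lemma monotone_UE (T : ℕ) : Monotone (UE T) := fun _ _ h =>
  sub_le_sub_right (Nat.cast_le.2 h) _

theorem no_gain_from_Tth_dominated_UE_general (T m n : ℕ) (hm : T ≤ m) (hn : T ≤ n)
    (P : Fin m → Fin n → ℝ) (hP : ∀ i j, P i j ∈ Set.Icc (0 : ℝ) 1)
    (hzero : ∃ S : Finset (Fin m), T - 1 ≤ S.card ∧ ∀ i ∈ S, ∀ j, P i j = 0) :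
    gval (m + 1) n (Fin.snoc P (fun _ => (0 : ℝ))) (UE T) T ∅ ∅ 0 =
      gval m n P (UE T) T ∅ ∅ 0 := by
  obtain ⟨S, hS, hSzero⟩ := hzero
  exact le_antisymm (gval_snoc_zero_le hP (monotone_UE T) hS hSzero hm hn)
    (gval_le_gval_snoc hP (fun _ => ⟨le_rfl, zero_le_one⟩) (monotone_UE T) hm hn)

/-- Under `U_E`, if Team 1 already has at least `T - 1` dominated
players (all-zero rows of `P`), then appending one more all-zero row to `P` does not
change the value of the game: a `T`-th dominated player gives no advantage over
`T - 1` of them. -/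
theorem no_gain_from_Tth_dominated_UE (T m n : ℕ) (hT : 1 ≤ T) (hm : T ≤ m) (hn : T ≤ n)
    (P : Fin m → Fin n → ℝ) (hP : ∀ i j, P i j ∈ Set.Icc (0 : ℝ) 1)
    (hzero : ∃ S : Finset (Fin m), T - 1 ≤ S.card ∧ ∀ i ∈ S, ∀ j, P i j = 0) :
    gval (m + 1) n (Fin.snoc P (fun _ => (0 : ℝ))) (UE T) T ∅ ∅ 0 =
      gval m n P (UE T) T ∅ ∅ 0 :=
  no_gain_from_Tth_dominated_UE_general T m n hm hn P hP hzero
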